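/- Let μ > 0 and ε > 0 with ε < μ²/4, and set b = (μ − √(μ²−4ε))/2. Let g : (0,∞) → ℝ be a smooth function satisfying the boundary conditions (B) and having finite D_μ-norm. Then the identity ∫₀^∞ (x g'' + (x+μ) g' + (μ−b) g)² x^{μ−1} dx = Q[g] + P₁[g] − (√(μ²−4ε)+1) P₀[g] holds. -/

import Mathlib

/-!
With `c = μ - b = (μ + √(μ² - 4ε)) / 2` one has `c (μ - c) = ε` and `2c - μ + 1 = √(μ² - 4ε) + 1`.
For any real `c`, expanding the square shows that the integrand on the left differs from the
integrands of `Q`, `P₁` (with `ε = c (μ - c)`) and `-(2c - μ + 1) P₀` by the exact derivative of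
`F = x^μ ((x + μ) g'² + c (2 g g' + g²))`. Since `|F| ≲ x^μ ((x + 1) g'² + g²)`, `F` vanishes at `0`
(boundedness of `g, g'` and `μ > 0`) and at `∞` (condition (B)). The finite `D_μ`-norm makes every
term integrable (`g'² x^(μ-1)` near `0` again by boundedness of `g'`), so `∫₀^∞ F' = 0`.
-/

open MeasureTheory Filter

noncomputable section

/-- `P₀[g] = ∫₀^∞ (g')² x^μ dx`. -/
def P0 (μ : ℝ) (g : ℝ → ℝ) : ℝ :=
  ∫ x in Set.Ioi (0 : ℝ), (deriv g x) ^ 2 * x ^ μ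

/-- `P₁[g] = ∫₀^∞ (x²(g')² − ε g²) x^{μ−1} dx`. -/
def P1 (μ ε : ℝ) (g : ℝ → ℝ) : ℝ :=
  ∫ x in Set.Ioi (0 : ℝ), (x ^ 2 * (deriv g x) ^ 2 - ε * (g x) ^ 2) * x ^ (μ - 1)

/-- `Q[g] = ∫₀^∞ (g'')² x^{μ+1} dx`. -/
def Q (μ : ℝ) (g : ℝ → ℝ) : ℝ :=
  ∫ x in Set.Ioi (0 : ℝ), (deriv (deriv g) x) ^ 2 * x ^ (μ + 1)

/-- The boundary conditions (B): `limsup_{x→0}(|g|+|g'|) < ∞` and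
`x^{μ+1} g'(x)² + x^μ g(x)² → 0` as `x → ∞`. -/
def BoundaryB (μ : ℝ) (g : ℝ → ℝ) : Prop :=
  (∃ M : ℝ, ∀ᶠ x in nhdsWithin 0 (Set.Ioi (0 : ℝ)), |g x| + |deriv g x| ≤ M) ∧
    Tendsto (fun x : ℝ => x ^ (μ + 1) * (deriv g x) ^ 2 + x ^ μ * (g x) ^ 2)
      atTop (nhds 0)

/-- `g` has finite `D_μ`-norm. -/
def FiniteDmu (μ : ℝ) (g : ℝ → ℝ) : Prop :=
  IntegrableOn (fun x => (deriv (deriv g) x) ^ 2 * x ^ (μ + 1)) (Set.Ioi 0) volume ∧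
    IntegrableOn (fun x => (deriv g x) ^ 2 * (x + 1) * x ^ μ) (Set.Ioi 0) volume ∧
    IntegrableOn (fun x => (g x) ^ 2 * x ^ (μ - 1)) (Set.Ioi 0) volume

open Set

theorem integral_Ioi_of_hasDerivAt_of_tendsto_nhdsGT {f f' : ℝ → ℝ} {a l m : ℝ}
    (hderiv : ∀ x ∈ Ioi a, HasDerivAt f (f' x) x) (f'int : IntegrableOn f' (Ioi a))
    (hfa : Tendsto f (nhdsWithin a (Ioi a)) (nhds l)) (hf : Tendsto f atTop (nhds m)) :
    ∫ x in Ioi a, f' x = m - l := by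
  classical
  have hcont : ContinuousWithinAt (Function.update f a l) (Ici a) a := by
    rw [← continuousWithinAt_Ioi_iff_Ici, continuousWithinAt_update_same,
      sdiff_singleton_eq_self self_notMem_Ioi]
    exact hfa
  have hderiv' : ∀ x ∈ Ioi a, HasDerivAt (Function.update f a l) (f' x) x := fun x hx =>
    (hderiv x hx).congr_of_eventuallyEq <|
      (eventually_ne_nhds (ne_of_gt hx)).mono fun y hy => Function.update_of_ne hy _ _
  have hf' : Tendsto (Function.update f a l) atTop (nhds m) :=
    hf.congr' <| (eventually_gt_atTop a).mono fun y hy => (Function.update_of_ne hy.ne' _ _).symm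
  simpa using integral_Ioi_of_hasDerivAt_of_tendsto hcont hderiv' f'int hf'

theorem MeasureTheory.IntegrableOn.of_continuousOn_of_abs_le {s : Set ℝ} {f h : ℝ → ℝ}
    (hs : MeasurableSet s) (hh : IntegrableOn h s) (hf : ContinuousOn f s)
    (hle : ∀ x ∈ s, |f x| ≤ h x) :
    IntegrableOn f s :=
  hh.mono' (hf.aestronglyMeasurable hs) (ae_restrict_of_forall_mem hs hle)

theorem Real.rpow_eq_rpow_sub_one_mul {x : ℝ} (hx : 0 < x) (μ : ℝ) :
    x ^ μ = x ^ (μ - 1) * x := by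
  rw [Real.rpow_sub_one hx.ne', div_mul_cancel₀ _ hx.ne']

theorem Real.rpow_add_one_eq_rpow_sub_one_mul_sq {x : ℝ} (hx : 0 < x) (μ : ℝ) :
    x ^ (μ + 1) = x ^ (μ - 1) * x ^ 2 := by
  rw [Real.rpow_add_one hx.ne', Real.rpow_eq_rpow_sub_one_mul hx μ]
  ring

theorem Real.continuousOn_rpow_const_Ioi (r : ℝ) : ContinuousOn (fun x : ℝ => x ^ r) (Ioi 0) :=
  continuousOn_id.rpow_const fun _ hx => Or.inl (ne_of_gt hx)

theorem integrableOn_sq_mul_rpow_sub_one_of_eventually_abs_le {u : ℝ → ℝ} {μ M : ℝ}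
    (hμ : 0 < μ) (hu : ContinuousOn u (Ioi 0))
    (hM : ∀ᶠ x in nhdsWithin 0 (Ioi 0), |u x| ≤ M)
    (hint : IntegrableOn (fun x => u x ^ 2 * x ^ μ) (Ioi 0)) :
    IntegrableOn (fun x => u x ^ 2 * x ^ (μ - 1)) (Ioi 0) := by
  obtain ⟨δ, hδ, hδM⟩ := mem_nhdsGT_iff_exists_Ioo_subset.1 hM
  have hδ : 0 < δ := hδ
  have hcont : ContinuousOn (fun x => u x ^ 2 * x ^ (μ - 1)) (Ioi 0) :=
    (hu.pow 2).mul (Real.continuousOn_rpow_const_Ioi _)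
  have hIci : Ici δ ⊆ Ioi 0 := fun x hx => hδ.trans_le hx
  rw [← Ioo_union_Ici_eq_Ioi hδ]
  refine IntegrableOn.union ?_ ?_
  · refine .of_continuousOn_of_abs_le measurableSet_Ioo
      (((intervalIntegral.integrableOn_Ioo_rpow_iff (s := μ - 1) hδ).2 (by linarith)).const_mul
        (M ^ 2))
      (hcont.mono Ioo_subset_Ioi_self) fun x hx => ?_
    have hux : |u x| ≤ M := hδM hx
    have hpow := Real.rpow_nonneg hx.1.le (μ - 1)
    rw [abs_of_nonneg (mul_nonneg (sq_nonneg _) hpow)]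
    exact mul_le_mul_of_nonneg_right (by nlinarith [abs_nonneg (u x), sq_abs (u x)]) hpow
  · refine .of_continuousOn_of_abs_le measurableSet_Ici ((hint.mono_set hIci).div_const δ)
      (hcont.mono hIci) fun x hx => ?_
    have hpow := Real.rpow_nonneg (hIci hx).le (μ - 1)
    rw [abs_of_nonneg (mul_nonneg (sq_nonneg _) hpow), le_div_iff₀ hδ,
      Real.rpow_eq_rpow_sub_one_mul (hIci hx) μ, ← mul_assoc]
    exact mul_le_mul_of_nonneg_left hx (mul_nonneg (sq_nonneg _) hpow)

section BoundaryTerm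

variable {μ c : ℝ} {g : ℝ → ℝ}

def weightedEnergy (μ : ℝ) (g : ℝ → ℝ) (x : ℝ) : ℝ :=
  x ^ μ * ((x + 1) * deriv g x ^ 2 + g x ^ 2)

def boundaryTerm (μ c : ℝ) (g : ℝ → ℝ) (x : ℝ) : ℝ :=
  x ^ μ * ((x + μ) * deriv g x ^ 2 + c * (2 * g x * deriv g x + g x ^ 2))

theorem abs_boundaryTerm_le {x : ℝ} (hx : 0 ≤ x) :
    |boundaryTerm μ c g x| ≤ (1 + |μ| + 2 * |c|) * weightedEnergy μ g x := by
  set D := deriv g x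
  set G := g x
  have hpos : |(x + μ) * D ^ 2| ≤ (x + |μ|) * D ^ 2 := by
    rw [abs_mul, abs_of_nonneg (sq_nonneg D)]
    gcongr
    exact (abs_add_le _ _).trans_eq (by rw [abs_of_nonneg hx])
  have hcross : |2 * G * D + G ^ 2| ≤ D ^ 2 + 2 * G ^ 2 :=
    abs_le.2 ⟨by nlinarith [sq_nonneg (G + D)], by nlinarith [sq_nonneg (G - D)]⟩
  have hinner : |(x + μ) * D ^ 2 + c * (2 * G * D + G ^ 2)| ≤
      (1 + |μ| + 2 * |c|) * ((x + 1) * D ^ 2 + G ^ 2) :=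
    calc _ ≤ (x + |μ|) * D ^ 2 + |c| * (D ^ 2 + 2 * G ^ 2) := by
          refine (abs_add_le _ _).trans (add_le_add hpos ?_)
          rw [abs_mul]
          gcongr
      _ ≤ _ := by
          nlinarith [mul_nonneg (mul_nonneg (abs_nonneg μ) hx) (sq_nonneg D),
            mul_nonneg (mul_nonneg (abs_nonneg c) hx) (sq_nonneg D),
            mul_nonneg (abs_nonneg c) (sq_nonneg D), mul_nonneg (abs_nonneg μ) (sq_nonneg G),
            sq_nonneg D, sq_nonneg G]
  rw [boundaryTerm, weightedEnergy, abs_mul, abs_of_nonneg (Real.rpow_nonneg hx _), mul_left_comm]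
  exact mul_le_mul_of_nonneg_left hinner (Real.rpow_nonneg hx _)

theorem tendsto_boundaryTerm {l : Filter ℝ} (hl : ∀ᶠ x in l, 0 ≤ x)
    (hE : Tendsto (weightedEnergy μ g) l (nhds 0)) :
    Tendsto (boundaryTerm μ c g) l (nhds 0) :=
  squeeze_zero_norm' (hl.mono fun _ hx => abs_boundaryTerm_le hx) (by simpa using hE.const_mul _)

theorem tendsto_weightedEnergy_nhdsGT_zero (hμ : 0 < μ) {M : ℝ}
    (hM : ∀ᶠ x in nhdsWithin 0 (Ioi 0), |g x| + |deriv g x| ≤ M) :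
    Tendsto (weightedEnergy μ g) (nhdsWithin 0 (Ioi 0)) (nhds 0) := by
  have hpow : Tendsto (fun x : ℝ => 2 * M ^ 2 * x ^ μ) (nhdsWithin 0 (Ioi 0)) (nhds 0) := by
    simpa [Real.zero_rpow hμ.ne'] using
      ((Real.continuous_rpow_const hμ.le).tendsto 0).mono_left nhdsWithin_le_nhds |>.const_mul
        (2 * M ^ 2)
  refine squeeze_zero' ?_ ?_ hpow
  · filter_upwards [self_mem_nhdsWithin] with x hx
    have hx : 0 < x := hx
    unfold weightedEnergy
    positivity
  · filter_upwards [hM, self_mem_nhdsWithin, Ioo_mem_nhdsGT zero_lt_one] with x hxM hx hx1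
    have hx : 0 < x := hx
    have hbound : (x + 1) * deriv g x ^ 2 + g x ^ 2 ≤ 2 * M ^ 2 := by
      nlinarith [abs_nonneg (g x), abs_nonneg (deriv g x), sq_abs (g x), sq_abs (deriv g x),
        abs_mul_abs_self (g x), hx1.2]
    rw [weightedEnergy, mul_comm]
    exact mul_le_mul_of_nonneg_right hbound (Real.rpow_nonneg hx.le _)

theorem tendsto_weightedEnergy_atTop
    (h : Tendsto (fun x => x ^ (μ + 1) * deriv g x ^ 2 + x ^ μ * g x ^ 2) atTop (nhds 0)) :
    Tendsto (weightedEnergy μ g) atTop (nhds 0) := by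
  refine squeeze_zero' ?_ ?_ (by simpa using h.const_mul 2)
  · filter_upwards [eventually_ge_atTop 0] with x hx
    unfold weightedEnergy
    positivity
  · filter_upwards [eventually_ge_atTop 1] with x hx
    have hx0 : 0 < x := one_pos.trans_le hx
    have hμx : x ^ μ ≤ x ^ μ * x := le_mul_of_one_le_right (Real.rpow_nonneg hx0.le _) hx
    rw [weightedEnergy, Real.rpow_add_one hx0.ne']
    nlinarith [mul_le_mul_of_nonneg_right hμx (sq_nonneg (deriv g x)),
      Real.rpow_nonneg hx0.le μ, sq_nonneg (g x)]

theorem hasDerivAt_boundaryTerm {x : ℝ} (hx : 0 < x) (hg : HasDerivAt g (deriv g x) x)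
    (hg' : HasDerivAt (deriv g) (deriv (deriv g) x) x) :
    HasDerivAt (boundaryTerm μ c g)
      ((x * deriv (deriv g) x + (x + μ) * deriv g x + c * g x) ^ 2 * x ^ (μ - 1)
        - deriv (deriv g) x ^ 2 * x ^ (μ + 1)
        - (x ^ 2 * deriv g x ^ 2 - c * (μ - c) * g x ^ 2) * x ^ (μ - 1)
        + (2 * c - μ + 1) * (deriv g x ^ 2 * x ^ μ)) x := by
  have hinner := (((hasDerivAt_id x).add_const μ).mul (hg'.pow 2)).add
    ((((hg.const_mul 2).mul hg').add (hg.pow 2)).const_mul c)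
  refine ((Real.hasDerivAt_rpow_const (p := μ) (Or.inl hx.ne')).mul hinner).congr_deriv ?_
  rw [Real.rpow_add_one_eq_rpow_sub_one_mul_sq hx, Real.rpow_eq_rpow_sub_one_mul hx μ]
  simp only [Pi.add_apply, Pi.mul_apply, Pi.pow_apply, id, Nat.cast_ofNat]
  ring

theorem FiniteDmu.integrableOn_deriv_sq_mul_rpow (hg : ContinuousOn (deriv g) (Ioi 0))
    (hD : FiniteDmu μ g) : IntegrableOn (fun x => deriv g x ^ 2 * x ^ μ) (Ioi 0) := by
  refine .of_continuousOn_of_abs_le measurableSet_Ioi hD.2.1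
    ((hg.pow 2).mul (Real.continuousOn_rpow_const_Ioi _)) fun x (hx : 0 < x) => ?_
  have := mul_nonneg (sq_nonneg (deriv g x)) (Real.rpow_nonneg hx.le μ)
  rw [abs_of_nonneg this]
  nlinarith

theorem FiniteDmu.integrableOn_deriv_sq_mul_rpow_add_one (hg : ContinuousOn (deriv g) (Ioi 0))
    (hD : FiniteDmu μ g) : IntegrableOn (fun x => deriv g x ^ 2 * x ^ (μ + 1)) (Ioi 0) := by
  refine .of_continuousOn_of_abs_le measurableSet_Ioi hD.2.1
    ((hg.pow 2).mul (Real.continuousOn_rpow_const_Ioi _)) fun x (hx : 0 < x) => ?_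
  have := mul_nonneg (sq_nonneg (deriv g x)) (Real.rpow_nonneg hx.le μ)
  rw [Real.rpow_add_one hx.ne', abs_of_nonneg (by positivity)]
  nlinarith

theorem FiniteDmu.integrableOn_sq_mul_rpow_sub_one (hμ : 0 < μ) (c : ℝ)
    (hg : ContDiffOn ℝ 2 g (Ioi 0)) (hB : BoundaryB μ g) (hD : FiniteDmu μ g) :
    IntegrableOn (fun x => (x * deriv (deriv g) x + (x + μ) * deriv g x + c * g x) ^ 2 *
      x ^ (μ - 1)) (Ioi 0) := by
  obtain ⟨M, hM⟩ := hB.1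
  have hg' := hg.continuousOn_deriv_of_isOpen isOpen_Ioi (by norm_num)
  have hg'' := (hg.deriv_of_isOpen isOpen_Ioi (m := 1) (by norm_num)).continuousOn_deriv_of_isOpen
    isOpen_Ioi le_rfl
  have hD' : IntegrableOn (fun x => deriv g x ^ 2 * x ^ (μ - 1)) (Ioi 0) :=
    integrableOn_sq_mul_rpow_sub_one_of_eventually_abs_le hμ hg'
      (hM.mono fun x hx => by linarith [abs_nonneg (g x)]) (hD.integrableOn_deriv_sq_mul_rpow hg')
  refine .of_continuousOn_of_abs_le measurableSet_Ioi
    ((((hD.1.add ((hD.integrableOn_deriv_sq_mul_rpow_add_one hg').const_mul 2)).add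
      (hD'.const_mul (2 * μ ^ 2))).add (hD.2.2.const_mul (c ^ 2))).const_mul 3)
    (((((continuousOn_id.mul hg'').add ((continuousOn_id.add continuousOn_const).mul hg')).add
      (continuousOn_const.mul hg.continuousOn)).pow 2).mul (Real.continuousOn_rpow_const_Ioi _))
    fun x (hx : 0 < x) => ?_
  set S := deriv (deriv g) x
  set D := deriv g x
  set G := g x
  have hw := Real.rpow_nonneg hx.le (μ - 1)
  have hsq : (x * S + (x + μ) * D + c * G) ^ 2 ≤
      3 * (x ^ 2 * S ^ 2 + 2 * x ^ 2 * D ^ 2 + 2 * μ ^ 2 * D ^ 2 + c ^ 2 * G ^ 2) := by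
    nlinarith [sq_nonneg (x * S - (x + μ) * D), sq_nonneg (x * S - c * G),
      sq_nonneg ((x + μ) * D - c * G), sq_nonneg (x * D - μ * D)]
  simp only [Pi.add_apply]
  rw [abs_of_nonneg (mul_nonneg (sq_nonneg _) hw), Real.rpow_add_one_eq_rpow_sub_one_mul_sq hx]
  calc _ ≤ 3 * (x ^ 2 * S ^ 2 + 2 * x ^ 2 * D ^ 2 + 2 * μ ^ 2 * D ^ 2 + c ^ 2 * G ^ 2) *
        x ^ (μ - 1) := mul_le_mul_of_nonneg_right hsq hw
    _ = _ := by ring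

theorem integral_sq_mul_rpow_sub_one_eq (hμ : 0 < μ) (c : ℝ) (hg : ContDiffOn ℝ 2 g (Ioi 0))
    (hB : BoundaryB μ g) (hD : FiniteDmu μ g) :
    ∫ x in Ioi 0, (x * deriv (deriv g) x + (x + μ) * deriv g x + c * g x) ^ 2 * x ^ (μ - 1) =
      Q μ g + P1 μ (c * (μ - c)) g - (2 * c - μ + 1) * P0 μ g := by
  have hg' := hg.continuousOn_deriv_of_isOpen isOpen_Ioi (by norm_num)
  have hL := hD.integrableOn_sq_mul_rpow_sub_one hμ c hg hB
  have hP1 : IntegrableOn (fun x => (x ^ 2 * deriv g x ^ 2 - c * (μ - c) * g x ^ 2) *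
      x ^ (μ - 1)) (Ioi 0) := by
    refine ((hD.integrableOn_deriv_sq_mul_rpow_add_one hg').sub
      (hD.2.2.const_mul (c * (μ - c)))).congr_fun (fun x (hx : 0 < x) => ?_) measurableSet_Ioi
    simp only [Pi.sub_apply, Real.rpow_add_one_eq_rpow_sub_one_mul_sq hx]
    ring
  have hderiv : ∀ x ∈ Ioi (0 : ℝ), HasDerivAt g (deriv g x) x := fun x hx =>
    ((hg.differentiableOn (by norm_num)).differentiableAt (isOpen_Ioi.mem_nhds hx)).hasDerivAt
  have hderiv' : ∀ x ∈ Ioi (0 : ℝ), HasDerivAt (deriv g) (deriv (deriv g) x) x := fun x hx =>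
    (((hg.deriv_of_isOpen isOpen_Ioi (m := 1) (by norm_num)).differentiableOn
      one_ne_zero).differentiableAt (isOpen_Ioi.mem_nhds hx)).hasDerivAt
  obtain ⟨M, hM⟩ := hB.1
  have hFTC := integral_Ioi_of_hasDerivAt_of_tendsto_nhdsGT
    (fun x hx => hasDerivAt_boundaryTerm (c := c) hx (hderiv x hx) (hderiv' x hx))
    (((hL.sub hD.1).sub hP1).add ((hD.integrableOn_deriv_sq_mul_rpow hg').const_mul _))
    (tendsto_boundaryTerm (eventually_nhdsWithin_of_forall fun x (hx : 0 < x) => hx.le)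
      (tendsto_weightedEnergy_nhdsGT_zero hμ hM))
    (tendsto_boundaryTerm (eventually_ge_atTop 0) (tendsto_weightedEnergy_atTop hB.2))
  rw [integral_add (by exact (hL.sub hD.1).sub hP1)
      (by exact (hD.integrableOn_deriv_sq_mul_rpow hg').const_mul _),
    integral_sub (by exact hL.sub hD.1) hP1, integral_sub hL hD.1, integral_const_mul] at hFTC
  unfold Q P1 P0
  linarith

end BoundaryTerm

theorem stmt_13_general (μ ε : ℝ) (hμ : 0 < μ) (hεμ : ε < μ ^ 2 / 4)
    (b : ℝ) (hb : b = (μ - Real.sqrt (μ ^ 2 - 4 * ε)) / 2)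
    (g : ℝ → ℝ) (hg : ContDiffOn ℝ (⊤ : ℕ∞) g (Set.Ioi 0))
    (hB : BoundaryB μ g) (hD : FiniteDmu μ g) :
    (∫ x in Set.Ioi (0 : ℝ),
        (x * deriv (deriv g) x + (x + μ) * deriv g x + (μ - b) * g x) ^ 2 * x ^ (μ - 1)) =
      Q μ g + P1 μ ε g - (Real.sqrt (μ ^ 2 - 4 * ε) + 1) * P0 μ g := by
  have hsqrt : Real.sqrt (μ ^ 2 - 4 * ε) ^ 2 = μ ^ 2 - 4 * ε := Real.sq_sqrt (by linarith)
  have hε : (μ - b) * (μ - (μ - b)) = ε := by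
    rw [hb]
    linear_combination (-1 / 4 : ℝ) * hsqrt
  have hcoeff : 2 * (μ - b) - μ + 1 = Real.sqrt (μ ^ 2 - 4 * ε) + 1 := by
    rw [hb]
    ring
  have := integral_sq_mul_rpow_sub_one_eq hμ (μ - b) (hg.of_le (WithTop.coe_le_coe.2 le_top))
    hB hD
  rwa [hε, hcoeff] at this

/-- The key integral identity:
`∫₀^∞ (x g'' + (x+μ) g' + (μ−b) g)² x^{μ−1} dx = Q[g] + P₁[g] − (√(μ²−4ε)+1) P₀[g]`,
where `b = (μ − √(μ²−4ε))/2`. -/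
theorem stmt_13 (μ ε : ℝ) (hμ : 0 < μ) (hε : 0 < ε) (hεμ : ε < μ ^ 2 / 4)
    (b : ℝ) (hb : b = (μ - Real.sqrt (μ ^ 2 - 4 * ε)) / 2)
    (g : ℝ → ℝ) (hg : ContDiffOn ℝ (⊤ : ℕ∞) g (Set.Ioi 0))
    (hB : BoundaryB μ g) (hD : FiniteDmu μ g) :
    (∫ x in Set.Ioi (0 : ℝ),
        (x * deriv (deriv g) x + (x + μ) * deriv g x + (μ - b) * g x) ^ 2 * x ^ (μ - 1)) =
      Q μ g + P1 μ ε g - (Real.sqrt (μ ^ 2 - 4 * ε) + 1) * P0 μ g :=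
  stmt_13_general μ ε hμ hεμ b hb g hg hB hD
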